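/- arXiv:2107.06535 — 2 statements merged into one kernel-verified Lean document; each statement's English description precedes it below -/
import Mathlib

section
/- Let N ≥ 2 be an integer, s ∈ (0,1) and 0 < t < s. Then (−Δ)^{t/2}𝐮 ∈ L^p(ℝ^N) for every 1 ≤ p ≤ ∞; that is, the function x ↦ ∫_{ℝ^N} (𝐮(x) − 𝐮(y)) |x−y|^{−(N+t)} dy is essentially bounded on ℝ^N and belongs to L^p(ℝ^N) for every 1 ≤ p < ∞. -/
open MeasureTheory Metric Set Real Module
open scoped NNReal
open scoped ENNReal

noncomputable section

/-- `ℝ^N` as a Euclidean space. -/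
abbrev E (N : ℕ) := EuclideanSpace ℝ (Fin N)

/-- The fractional torsion function `𝐮`:
`𝐮(x) = c_{N,s} (1 - |x|²)^s` on the unit ball and `0` outside. -/
def torsion (N : ℕ) (s : ℝ) (x : E N) : ℝ :=
  if ‖x‖ < 1 then
    (2 ^ (-(2 * s)) * Real.Gamma ((N : ℝ) / 2) /
      (Real.Gamma ((N : ℝ) / 2 + s) * Real.Gamma (1 + s))) * (1 - ‖x‖ ^ 2) ^ s
  else 0

/-- The fractional Laplacian `(-Δ)^{t/2} u` (normalization constant omitted):
`x ↦ ∫ (u(x) - u(y)) |x - y|^{-(N+t)} dy`. -/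
def fracLap (N : ℕ) (t : ℝ) (u : E N → ℝ) (x : E N) : ℝ :=
  ∫ y, (u x - u y) * ‖x - y‖ ^ (-((N : ℝ) + t))

namespace TorsionAux

def cc (N : ℕ) (s : ℝ) : ℝ :=
  2 ^ (-(2 * s)) * Real.Gamma ((N : ℝ) / 2) /
      (Real.Gamma ((N : ℝ) / 2 + s) * Real.Gamma (1 + s))

variable {N : ℕ} {s : ℝ}

lemma cc_pos (hN : 2 ≤ N) (hs : 0 < s) : 0 < cc N s := by
  have h1 : (0:ℝ) < (N : ℝ) / 2 := by positivity
  have := Real.Gamma_pos_of_pos h1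
  have := Real.Gamma_pos_of_pos (by linarith : (0:ℝ) < (N : ℝ) / 2 + s)
  have := Real.Gamma_pos_of_pos (by linarith : (0:ℝ) < 1 + s)
  have h2 : (0:ℝ) < (2:ℝ) ^ (-(2*s)) := Real.rpow_pos_of_pos (by norm_num) _
  unfold cc; positivity

def vv {N : ℕ} (x : E N) : ℝ := max (1 - ‖x‖ ^ 2) 0

lemma vv_nonneg (x : E N) : 0 ≤ vv x := le_max_right _ _
lemma vv_le_one (x : E N) : vv x ≤ 1 := by
  have : (1:ℝ) - ‖x‖ ^ 2 ≤ 1 := by nlinarith [norm_nonneg x, sq_nonneg (‖x‖)]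
  simp [vv, this]

lemma torsion_eq (hs : 0 < s) (x : E N) : torsion N s x = cc N s * vv x ^ s := by
  unfold torsion cc vv
  by_cases h : ‖x‖ < 1
  · rw [if_pos h, max_eq_left]
    nlinarith [norm_nonneg x]
  · rw [if_neg h, max_eq_right, Real.zero_rpow hs.ne', mul_zero]
    push_neg at h
    nlinarith [norm_nonneg x]

lemma vv_eq_zero {x : E N} (h : 1 ≤ ‖x‖) : vv x = 0 := by
  rw [vv, max_eq_right]; nlinarith [norm_nonneg x]

lemma torsion_abs_le (hN : 2 ≤ N) (hs : 0 < s) (x : E N) : |torsion N s x| ≤ cc N s := by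
  rw [torsion_eq hs, abs_of_nonneg (mul_nonneg (cc_pos hN hs).le (Real.rpow_nonneg (vv_nonneg x) s))]
  calc cc N s * vv x ^ s ≤ cc N s * 1 ^ s := by
        gcongr
        exacts [(cc_pos hN hs).le, vv_nonneg x, vv_le_one x]
  _ = cc N s := by simp

lemma vv_diff_le (x y : E N) : |vv x - vv y| ≤ 3 * min ‖x - y‖ 1 := by
  rcases le_or_gt 1 (min ‖x‖ ‖y‖) with h | h
  · rw [vv_eq_zero (le_trans h (min_le_left _ _)), vv_eq_zero (le_trans h (min_le_right _ _))]
    simp [le_min_iff]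
  · rcases le_or_gt ‖x - y‖ 1 with hd | hd
    · rw [min_eq_left hd]
      have h1 : |vv x - vv y| ≤ |(1 - ‖x‖ ^ 2) - (1 - ‖y‖ ^ 2)| := abs_max_sub_max_le_abs _ _ _
      have h2 : |(1 - ‖x‖ ^ 2) - (1 - ‖y‖ ^ 2)| = |‖y‖ - ‖x‖| * (‖y‖ + ‖x‖) := by
        rw [← abs_of_nonneg (by positivity : (0:ℝ) ≤ ‖y‖ + ‖x‖), ← abs_mul]
        ring_nf
      have h3 : |‖y‖ - ‖x‖| ≤ ‖x - y‖ := by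
        rw [abs_sub_comm]
        exact abs_norm_sub_norm_le x y
      have h4 : ‖y‖ + ‖x‖ ≤ 2 * min ‖x‖ ‖y‖ + ‖x - y‖ := by
        rcases le_total ‖x‖ ‖y‖ with he | he
        · rw [min_eq_left he]
          have := norm_sub_norm_le y x
          rw [norm_sub_rev] at this
          linarith
        · rw [min_eq_right he]
          have := norm_sub_norm_le x y
          linarith
      have h5 : ‖y‖ + ‖x‖ ≤ 3 := by linarith
      calc |vv x - vv y| ≤ |‖y‖ - ‖x‖| * (‖y‖ + ‖x‖) := h1.trans h2.le
      _ ≤ ‖x - y‖ * 3 := by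
          apply mul_le_mul h3 h5 (by positivity) (norm_nonneg _)
      _ = 3 * ‖x - y‖ := by ring
    · rw [min_eq_right hd.le]
      have := vv_nonneg x; have := vv_nonneg y
      have := vv_le_one x; have := vv_le_one y
      rw [abs_le]; constructor <;> linarith

lemma rpow_diff_le {a b : ℝ} (ha : 0 ≤ a) (hb : 0 ≤ b) (hs0 : 0 ≤ s) (hs1 : s ≤ 1) :
    |a ^ s - b ^ s| ≤ |a - b| ^ s := by
  wlog hab : b ≤ a generalizing a b
  · rw [abs_sub_comm, abs_sub_comm a b]; exact this hb ha (by linarith)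
  have key : a ^ s ≤ (a - b) ^ s + b ^ s := by
    calc a ^ s = ((a - b) + b) ^ s := by ring_nf
    _ ≤ (a - b) ^ s + b ^ s := by
        have h := NNReal.rpow_add_le_add_rpow (⟨a - b, by linarith⟩ : ℝ≥0) (⟨b, hb⟩ : ℝ≥0) hs0 hs1
        have h3 := NNReal.coe_le_coe.mpr h
        push_cast [NNReal.coe_rpow, NNReal.coe_mk] at h3
        exact h3
  have h1 : 0 ≤ a ^ s - b ^ s := sub_nonneg.mpr (Real.rpow_le_rpow hb hab hs0)
  rw [abs_of_nonneg h1, abs_of_nonneg (by linarith)]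
  linarith

lemma npow_rpow_comm {x : ℝ} (hx : 0 ≤ x) (n : ℕ) (r : ℝ) : (x ^ n) ^ r = (x ^ r) ^ n := by
  rw [← Real.rpow_natCast x n, ← Real.rpow_natCast (x ^ r) n, ← Real.rpow_mul hx,
    ← Real.rpow_mul hx, mul_comm]

lemma finite_singular {N : ℕ} (hN : 2 ≤ N) {r : ℝ} (hr0 : r < 0) (hrN : -(N:ℝ) < r) :
    ∫⁻ z in ball (0:E N) 1, ENNReal.ofReal (‖z‖ ^ r) < ∞ := by
  classical
  haveI : Nontrivial (E N) := Module.nontrivial_of_finrank_pos (R := ℝ) (by simp; omega)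
  set b : ℝ := (2:ℝ)⁻¹ with hb
  have hb0 : (0:ℝ) < b := by norm_num
  have hb1 : b < 1 := by norm_num
  set V := volume (ball (0:E N) 1) with hV
  have hVfin : V < ∞ := measure_ball_lt_top
  set A : ℕ → Set (E N) := fun k => {z | b ^ (k+1) ≤ ‖z‖} ∩ ball 0 (b ^ k) with hA
  have hAmeas : ∀ k, MeasurableSet (A k) := fun k =>
    (measurableSet_le measurable_const measurable_norm).inter measurableSet_ball
  have hcover : ball (0:E N) 1 ⊆ {0} ∪ ⋃ k, A k := by
    intro z hz
    rcases eq_or_ne z 0 with rfl | hz0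
    · exact Or.inl rfl
    · right
      have hz1 : ‖z‖ < 1 := mem_ball_zero_iff.mp hz
      have hzpos : 0 < ‖z‖ := norm_pos_iff.mpr hz0
      have hex : ∃ m : ℕ, b ^ (m+1) ≤ ‖z‖ := by
        obtain ⟨m, hm⟩ := exists_pow_lt_of_lt_one hzpos hb1
        exact ⟨m, by
          calc b ^ (m+1) ≤ b ^ m := pow_le_pow_of_le_one hb0.le hb1.le (by omega)
          _ ≤ ‖z‖ := hm.le⟩
      set k := Nat.find hex with hk
      have hk1 : b ^ (k+1) ≤ ‖z‖ := Nat.find_spec hex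
      have hk2 : ‖z‖ < b ^ k := by
        rcases Nat.eq_zero_or_pos k with h0 | h0
        · rw [h0, pow_zero]; exact hz1
        · have := Nat.find_min hex (m := k - 1) (by omega)
          push_neg at this
          have hkk : k - 1 + 1 = k := by omega
          rwa [hkk] at this
      exact mem_iUnion.mpr ⟨k, hk1, mem_ball_zero_iff.mpr hk2⟩
  set ρ : ℝ := b ^ (r + (N:ℝ)) with hρ
  have hρ0 : 0 ≤ ρ := Real.rpow_nonneg hb0.le _
  have hρ1 : ρ < 1 := Real.rpow_lt_one hb0.le hb1 (by linarith)
  have key : ∀ k, ∫⁻ z in A k, ENNReal.ofReal (‖z‖ ^ r)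
      ≤ ENNReal.ofReal (b ^ r) * ENNReal.ofReal ρ ^ k * V := by
    intro k
    have hbk1 : (0:ℝ) < b ^ (k+1) := pow_pos hb0 _
    have step1 : ∫⁻ z in A k, ENNReal.ofReal (‖z‖ ^ r)
        ≤ ENNReal.ofReal ((b ^ (k+1)) ^ r) * volume (A k) := by
      calc ∫⁻ z in A k, ENNReal.ofReal (‖z‖ ^ r)
          ≤ ∫⁻ _ in A k, ENNReal.ofReal ((b ^ (k+1)) ^ r) := by
            refine setLIntegral_mono' (hAmeas k) (fun z hz => ?_)
            exact ENNReal.ofReal_le_ofReal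
              (Real.rpow_le_rpow_of_nonpos hbk1 hz.1 hr0.le)
      _ = ENNReal.ofReal ((b ^ (k+1)) ^ r) * volume (A k) := setLIntegral_const _ _
    have step2 : volume (A k) ≤ ENNReal.ofReal ((b ^ k) ^ N) * V := by
      calc volume (A k) ≤ volume (ball (0:E N) (b ^ k)) :=
            measure_mono inter_subset_right
      _ = ENNReal.ofReal ((b ^ k) ^ finrank ℝ (E N)) * V :=
            Measure.addHaar_ball volume 0 (pow_nonneg hb0.le k)
      _ = ENNReal.ofReal ((b ^ k) ^ N) * V := by norm_num
    have ereal : (b ^ (k+1) : ℝ) ^ r * (b ^ k) ^ N = b ^ r * ρ ^ k := by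
      rw [npow_rpow_comm hb0.le (k+1) r, pow_succ, mul_comm ((b^r)^k) (b^r)]
      have h1 : ((b:ℝ) ^ k) ^ N = ((b:ℝ) ^ N) ^ k := by rw [← pow_mul, ← pow_mul, mul_comm]
      have h2 : (ρ : ℝ) ^ k = ((b:ℝ) ^ r) ^ k * ((b:ℝ) ^ N) ^ k := by
        rw [← mul_pow]
        congr 1
        rw [hρ, Real.rpow_add hb0, Real.rpow_natCast]
      rw [h1, h2]
      ring
    calc ∫⁻ z in A k, ENNReal.ofReal (‖z‖ ^ r)
        ≤ ENNReal.ofReal ((b ^ (k+1)) ^ r) * (ENNReal.ofReal ((b ^ k) ^ N) * V) := by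
          exact step1.trans (by gcongr)
    _ = ENNReal.ofReal ((b ^ (k+1)) ^ r * (b ^ k) ^ N) * V := by
          rw [← mul_assoc, ← ENNReal.ofReal_mul (Real.rpow_nonneg hbk1.le r)]
    _ = ENNReal.ofReal (b ^ r) * ENNReal.ofReal ρ ^ k * V := by
          rw [ereal, ENNReal.ofReal_mul (Real.rpow_nonneg hb0.le r), ENNReal.ofReal_pow hρ0]
  calc ∫⁻ z in ball (0:E N) 1, ENNReal.ofReal (‖z‖ ^ r)
      ≤ ∫⁻ z in {0} ∪ ⋃ k, A k, ENNReal.ofReal (‖z‖ ^ r) := lintegral_mono_set hcover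
  _ ≤ (∫⁻ z in ({0} : Set (E N)), ENNReal.ofReal (‖z‖ ^ r))
      + ∫⁻ z in ⋃ k, A k, ENNReal.ofReal (‖z‖ ^ r) := lintegral_union_le _ _ _
  _ ≤ 0 + ∑' k, ∫⁻ z in A k, ENNReal.ofReal (‖z‖ ^ r) := by
      gcongr
      · rw [lintegral_singleton]
        simp [Real.zero_rpow hr0.ne]
      · exact lintegral_iUnion_le _ _
  _ ≤ 0 + ∑' k, ENNReal.ofReal (b ^ r) * ENNReal.ofReal ρ ^ k * V := by
      gcongr with k
      exact key k
  _ < ∞ := by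
      rw [zero_add]
      have : ∑' k, ENNReal.ofReal (b ^ r) * ENNReal.ofReal ρ ^ k * V
          = ENNReal.ofReal (b ^ r) * (∑' k, ENNReal.ofReal ρ ^ k) * V := by
        rw [ENNReal.tsum_mul_right, ENNReal.tsum_mul_left]
      rw [this, ENNReal.tsum_geometric]
      refine ENNReal.mul_lt_top (ENNReal.mul_lt_top ENNReal.ofReal_lt_top ?_) hVfin
      exact ENNReal.inv_lt_top.mpr (tsub_pos_of_lt (ENNReal.ofReal_lt_one.mpr hρ1))

lemma finite_tail {N : ℕ} (hN : 2 ≤ N) {r : ℝ} (hrN : (N:ℝ) < r) :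
    ∫⁻ z in (ball (0:E N) 1)ᶜ, ENNReal.ofReal (‖z‖ ^ (-r)) < ∞ := by
  have hr0 : (0:ℝ) < r := lt_of_le_of_lt (by positivity) hrN
  have hbound : ∀ z : E N, z ∈ (ball (0:E N) 1)ᶜ →
      ENNReal.ofReal (‖z‖ ^ (-r)) ≤ ENNReal.ofReal ((2:ℝ) ^ r * (1 + ‖z‖) ^ (-r)) := by
    intro z hz
    have hz1 : (1:ℝ) ≤ ‖z‖ := by simpa using hz
    have hzpos : (0:ℝ) < ‖z‖ := lt_of_lt_of_le one_pos hz1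
    apply ENNReal.ofReal_le_ofReal
    have h2 : (1 + ‖z‖) / 2 ≤ ‖z‖ := by linarith
    have h3 : ((1 + ‖z‖) / 2) ^ (-r) ≥ ‖z‖ ^ (-r) :=
      Real.rpow_le_rpow_of_nonpos (by linarith) h2 (by linarith)
    calc ‖z‖ ^ (-r) ≤ ((1 + ‖z‖) / 2) ^ (-r) := h3
    _ = (2:ℝ) ^ r * (1 + ‖z‖) ^ (-r) := by
        rw [Real.div_rpow (by linarith) (by norm_num), Real.rpow_neg (by norm_num : (0:ℝ) ≤ 2),
          div_eq_mul_inv, inv_inv, mul_comm]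
  calc ∫⁻ z in (ball (0:E N) 1)ᶜ, ENNReal.ofReal (‖z‖ ^ (-r))
      ≤ ∫⁻ z in (ball (0:E N) 1)ᶜ, ENNReal.ofReal ((2:ℝ) ^ r * (1 + ‖z‖) ^ (-r)) :=
        setLIntegral_mono' measurableSet_ball.compl hbound
  _ ≤ ∫⁻ z : E N, ENNReal.ofReal ((2:ℝ) ^ r * (1 + ‖z‖) ^ (-r)) :=
        setLIntegral_le_lintegral _ _
  _ = ENNReal.ofReal ((2:ℝ) ^ r) * ∫⁻ z : E N, ENNReal.ofReal ((1 + ‖z‖) ^ (-r)) := by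
        rw [← lintegral_const_mul' _ _ ENNReal.ofReal_ne_top]
        congr 1
        ext z
        rw [← ENNReal.ofReal_mul (Real.rpow_nonneg (by norm_num) r)]
  _ < ∞ := by
        refine ENNReal.mul_lt_top ENNReal.ofReal_lt_top ?_
        refine finite_integral_one_add_norm ?_
        simpa using hrN

def ker (N : ℕ) (s t : ℝ) (z : E N) : ℝ := min (‖z‖ ^ s) 1 * ‖z‖ ^ (-((N:ℝ) + t))

lemma ker_nonneg {N : ℕ} {s t : ℝ} (z : E N) : 0 ≤ ker N s t z :=
  mul_nonneg (le_min (Real.rpow_nonneg (norm_nonneg z) s) zero_le_one)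
    (Real.rpow_nonneg (norm_nonneg z) _)

lemma ker_measurable (N : ℕ) (s t : ℝ) : Measurable (ker N s t) := by
  unfold ker
  fun_prop

lemma ker_integrable {N : ℕ} {s t : ℝ} (hN : 2 ≤ N) (hs0 : 0 < s) (hs1 : s < 1)
    (ht : 0 < t) (hts : t < s) : Integrable (ker N s t) := by
  refine ⟨(ker_measurable N s t).aestronglyMeasurable, ?_⟩
  rw [hasFiniteIntegral_iff_ofReal (ae_of_all _ ker_nonneg)]
  rw [← lintegral_add_compl (fun z => ENNReal.ofReal (ker N s t z)) measurableSet_ball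
    (μ := (volume : Measure (E N)))]
  have hNR : (2:ℝ) ≤ (N:ℝ) := by exact_mod_cast hN
  apply ENNReal.add_lt_top.mpr
  constructor
  · -- ball part
    calc ∫⁻ z in ball (0:E N) 1, ENNReal.ofReal (ker N s t z)
        ≤ ∫⁻ z in ball (0:E N) 1, ENNReal.ofReal (‖z‖ ^ (s - ((N:ℝ) + t))) := by
          refine setLIntegral_mono' measurableSet_ball (fun z _ => ?_)
          apply ENNReal.ofReal_le_ofReal
          rcases eq_or_ne z 0 with rfl | hz0
          · have hNt : ((N:ℝ) + t) ≠ 0 := by positivity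
            simp only [ker, norm_zero]
            rw [Real.zero_rpow hs0.ne', Real.zero_rpow (neg_ne_zero.mpr hNt),
              Real.zero_rpow (show s - ((N:ℝ) + t) ≠ 0 from ne_of_lt (by linarith))]
            simp
          · have hzpos : 0 < ‖z‖ := norm_pos_iff.mpr hz0
            calc ker N s t z ≤ ‖z‖ ^ s * ‖z‖ ^ (-((N:ℝ) + t)) := by
                  apply mul_le_mul_of_nonneg_right (min_le_left _ _)
                    (Real.rpow_nonneg (norm_nonneg z) _)
            _ = ‖z‖ ^ (s - ((N:ℝ) + t)) := by
                  rw [← Real.rpow_add hzpos]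
                  ring_nf
    _ < ∞ := finite_singular hN (by linarith) (by linarith)
  · -- complement part
    calc ∫⁻ z in (ball (0:E N) 1)ᶜ, ENNReal.ofReal (ker N s t z)
        ≤ ∫⁻ z in (ball (0:E N) 1)ᶜ, ENNReal.ofReal (‖z‖ ^ (-((N:ℝ) + t))) := by
          refine setLIntegral_mono' measurableSet_ball.compl (fun z _ => ?_)
          apply ENNReal.ofReal_le_ofReal
          calc ker N s t z ≤ 1 * ‖z‖ ^ (-((N:ℝ) + t)) :=
                mul_le_mul_of_nonneg_right (min_le_right _ _)
                  (Real.rpow_nonneg (norm_nonneg z) _)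
          _ = ‖z‖ ^ (-((N:ℝ) + t)) := one_mul _
    _ < ∞ := finite_tail hN (by linarith)

lemma torsion_measurable (N : ℕ) (s : ℝ) : Measurable (torsion N s) := by
  unfold torsion
  refine Measurable.ite (measurableSet_lt measurable_norm measurable_const) ?_ measurable_const
  fun_prop

lemma torsion_diff_le (hN : 2 ≤ N) (hs0 : 0 < s) (hs1 : s ≤ 1) (x y : E N) :
    |torsion N s x - torsion N s y| ≤ 3 * cc N s * min (‖x - y‖ ^ s) 1 := by
  rw [torsion_eq hs0, torsion_eq hs0, ← mul_sub, abs_mul,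
    abs_of_nonneg (cc_pos hN hs0).le]
  have h1 : |vv x ^ s - vv y ^ s| ≤ |vv x - vv y| ^ s :=
    rpow_diff_le (vv_nonneg x) (vv_nonneg y) hs0.le hs1
  have h2 : |vv x - vv y| ^ s ≤ (3 * min ‖x - y‖ 1) ^ s :=
    Real.rpow_le_rpow (abs_nonneg _) (vv_diff_le x y) hs0.le
  have h3 : (3 * min ‖x - y‖ 1 : ℝ) ^ s = 3 ^ s * (min ‖x - y‖ 1) ^ s :=
    Real.mul_rpow (by norm_num) (le_min (norm_nonneg _) zero_le_one)
  have h4 : (3:ℝ) ^ s ≤ 3 := by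
    calc (3:ℝ) ^ s ≤ 3 ^ (1:ℝ) := Real.rpow_le_rpow_of_exponent_le (by norm_num) hs1
    _ = 3 := Real.rpow_one 3
  have h4' : (0:ℝ) ≤ 3 ^ s := Real.rpow_nonneg (by norm_num) s
  have h5 : (min ‖x - y‖ 1 : ℝ) ^ s = min (‖x - y‖ ^ s) 1 := by
    rcases le_total ‖x - y‖ 1 with h | h
    · rw [min_eq_left h, min_eq_left]
      calc ‖x - y‖ ^ s ≤ 1 ^ s := Real.rpow_le_rpow (norm_nonneg _) h hs0.le
      _ = 1 := Real.one_rpow s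
    · rw [min_eq_right h, min_eq_right, Real.one_rpow]
      calc (1:ℝ) = 1 ^ s := (Real.one_rpow s).symm
      _ ≤ ‖x - y‖ ^ s := Real.rpow_le_rpow zero_le_one h hs0.le
  have hm : (0:ℝ) ≤ min (‖x - y‖ ^ s) 1 := le_min (Real.rpow_nonneg (norm_nonneg _) s) zero_le_one
  calc cc N s * |vv x ^ s - vv y ^ s| ≤ cc N s * (3 ^ s * min (‖x - y‖ ^ s) 1) := by
        rw [← h5, ← h3]
        exact mul_le_mul_of_nonneg_left (h1.trans h2) (cc_pos hN hs0).le
  _ ≤ 3 * cc N s * min (‖x - y‖ ^ s) 1 := by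
        nlinarith [mul_nonneg (mul_nonneg (cc_pos hN hs0).le hm) (sub_nonneg.mpr h4)]

lemma integrand_bound (hN : 2 ≤ N) (hs0 : 0 < s) (hs1 : s ≤ 1) (t : ℝ) (x y : E N) :
    ‖(torsion N s x - torsion N s y) * ‖x - y‖ ^ (-((N:ℝ) + t))‖
      ≤ 3 * cc N s * ker N s t (x - y) := by
  rw [Real.norm_eq_abs, abs_mul, abs_of_nonneg (Real.rpow_nonneg (norm_nonneg _) _), ker,
    ← mul_assoc]
  exact mul_le_mul_of_nonneg_right (torsion_diff_le hN hs0 hs1 x y)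
    (Real.rpow_nonneg (norm_nonneg _) _)

def Kbound (N : ℕ) (s t : ℝ) : ℝ := 3 * cc N s * ∫ z, ker N s t z

lemma Kbound_nonneg (hN : 2 ≤ N) (hs0 : 0 < s) : 0 ≤ Kbound N s t := by
  refine mul_nonneg (by nlinarith [cc_pos hN hs0]) ?_
  exact integral_nonneg ker_nonneg

lemma fracLap_le (hN : 2 ≤ N) (hs0 : 0 < s) (hs1 : s < 1) (ht : 0 < t) (hts : t < s)
    (x : E N) : ‖fracLap N t (torsion N s) x‖ ≤ Kbound N s t := by
  have hker := ker_integrable hN hs0 hs1 ht hts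
  have hint : Integrable (fun y => 3 * cc N s * ker N s t (x - y)) :=
    (hker.comp_sub_left x).const_mul _
  calc ‖fracLap N t (torsion N s) x‖
      ≤ ∫ y, 3 * cc N s * ker N s t (x - y) := by
        refine norm_integral_le_of_norm_le hint (ae_of_all _ (fun y => ?_))
        exact integrand_bound hN hs0 hs1.le t x y
  _ = 3 * cc N s * ∫ y, ker N s t (x - y) := integral_const_mul _ _
  _ = Kbound N s t := by rw [integral_sub_left_eq_self (ker N s t) volume x]; rfl

lemma torsion_eq_zero (hs0 : 0 < s) {x : E N} (hx : 1 ≤ ‖x‖) : torsion N s x = 0 := by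
  rw [torsion_eq hs0, vv_eq_zero hx, Real.zero_rpow hs0.ne', mul_zero]

lemma fracLap_decay (hN : 2 ≤ N) (hs0 : 0 < s) (ht : 0 < t) {x : E N} (hx : 2 ≤ ‖x‖) :
    ‖fracLap N t (torsion N s) x‖
      ≤ cc N s * (volume (ball (0:E N) 1)).toReal * (‖x‖ / 2) ^ (-((N:ℝ) + t)) := by
  have hx1 : (1:ℝ) ≤ ‖x‖ := by linarith
  have hux : torsion N s x = 0 := torsion_eq_zero hs0 hx1
  have hxpos : (0:ℝ) < ‖x‖ / 2 := by linarith
  set c : ℝ := cc N s * (‖x‖ / 2) ^ (-((N:ℝ) + t)) with hc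
  have hcnn : 0 ≤ c := mul_nonneg (cc_pos hN hs0).le (Real.rpow_nonneg hxpos.le _)
  have hG : Integrable ((ball (0:E N) 1).indicator (fun _ => c)) := by
    refine IntegrableOn.integrable_indicator ?_ measurableSet_ball
    exact integrableOn_const measure_ball_lt_top.ne
  have hb : ∀ y : E N, ‖(torsion N s x - torsion N s y) * ‖x - y‖ ^ (-((N:ℝ) + t))‖
      ≤ (ball (0:E N) 1).indicator (fun _ => c) y := by
    intro y
    rcases lt_or_ge ‖y‖ 1 with hy | hy
    · rw [indicator_of_mem (mem_ball_zero_iff.mpr hy)]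
      rw [hux, zero_sub, norm_mul, norm_neg]
      have hxy : ‖x‖ / 2 ≤ ‖x - y‖ := by
        have := norm_sub_norm_le x y
        have : ‖x‖ - ‖y‖ ≤ ‖x - y‖ := norm_sub_norm_le x y
        linarith
      have h1 : ‖(‖x - y‖ ^ (-((N:ℝ) + t)))‖ ≤ (‖x‖ / 2) ^ (-((N:ℝ) + t)) := by
        rw [Real.norm_eq_abs, abs_of_nonneg (Real.rpow_nonneg (norm_nonneg _) _)]
        exact Real.rpow_le_rpow_of_nonpos hxpos hxy (neg_nonpos.mpr (by positivity))
      have h2 : ‖torsion N s y‖ ≤ cc N s := by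
        rw [Real.norm_eq_abs]; exact torsion_abs_le hN hs0 y
      calc ‖torsion N s y‖ * ‖(‖x - y‖ ^ (-((N:ℝ) + t)))‖
          ≤ cc N s * (‖x‖ / 2) ^ (-((N:ℝ) + t)) :=
            mul_le_mul h2 h1 (norm_nonneg _) (cc_pos hN hs0).le
      _ = c := rfl
    · rw [hux, torsion_eq_zero hs0 hy]
      simp only [sub_zero, zero_mul, norm_zero]
      exact indicator_nonneg (fun _ _ => hcnn) y
  calc ‖fracLap N t (torsion N s) x‖
      ≤ ∫ y, (ball (0:E N) 1).indicator (fun _ => c) y :=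
        norm_integral_le_of_norm_le hG (ae_of_all _ hb)
  _ = (volume (ball (0:E N) 1)).toReal • c := integral_indicator_const _ measurableSet_ball
  _ = cc N s * (volume (ball (0:E N) 1)).toReal * (‖x‖ / 2) ^ (-((N:ℝ) + t)) := by
      rw [smul_eq_mul, hc]; ring

lemma fracLap_aesm (N : ℕ) (s t : ℝ) :
    AEStronglyMeasurable (fracLap N t (torsion N s)) volume := by
  have hm : Measurable (fun p : E N × E N =>
      (torsion N s p.1 - torsion N s p.2) * ‖p.1 - p.2‖ ^ (-((N:ℝ) + t))) := by
    apply Measurable.mul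
    · exact ((torsion_measurable N s).comp measurable_fst).sub
        ((torsion_measurable N s).comp measurable_snd)
    · fun_prop
  exact (hm.aestronglyMeasurable
    (μ := (volume : Measure (E N)).prod volume)).integral_prod_right'

end TorsionAux

/-- for `0 < t < s`, `(-Δ)^{t/2} 𝐮 ∈ L^p(ℝ^N)` for every `1 ≤ p ≤ ∞`. -/
theorem torsion_fracLap_memLp_of_lt (N : ℕ) (hN : 2 ≤ N) (s t : ℝ)
    (hs : s ∈ Set.Ioo (0 : ℝ) 1) (ht : 0 < t) (hts : t < s) :
    ∀ p : ℝ≥0∞, 1 ≤ p → MemLp (fracLap N t (torsion N s)) p volume := by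
  obtain ⟨hs0, hs1⟩ := hs
  have hNR : (2:ℝ) ≤ (N:ℝ) := by exact_mod_cast hN
  set r : ℝ := (N:ℝ) + t with hr
  have hrpos : 0 < r := by positivity
  have hNr : (N:ℝ) < r := by simp [hr]; linarith
  set K := TorsionAux.Kbound N s t with hK
  have hK0 : 0 ≤ K := TorsionAux.Kbound_nonneg hN hs0
  have hKb : ∀ x, ‖fracLap N t (torsion N s) x‖ ≤ K :=
    TorsionAux.fracLap_le hN hs0 hs1 ht hts
  have hmeas := TorsionAux.fracLap_aesm N s t
  set V : ℝ := (volume (ball (0:E N) 1)).toReal with hV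
  have hV0 : 0 ≤ V := ENNReal.toReal_nonneg
  have hcc0 : 0 ≤ TorsionAux.cc N s := (TorsionAux.cc_pos hN hs0).le
  set c2 : ℝ := TorsionAux.cc N s * V * 4 ^ r with hc2
  have hc20 : 0 ≤ c2 := by
    have : (0:ℝ) ≤ (4:ℝ) ^ r := Real.rpow_nonneg (by norm_num) r
    positivity
  set C : ℝ := K * 3 ^ r + c2 with hC
  have h3r : (0:ℝ) ≤ (3:ℝ) ^ r := Real.rpow_nonneg (by norm_num) r
  have hC0 : 0 ≤ C := by positivity
  have hbH : ∀ x : E N, ‖fracLap N t (torsion N s) x‖ ≤ C * (1 + ‖x‖) ^ (-r) := by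
    intro x
    have h1x : (0:ℝ) < 1 + ‖x‖ := by positivity
    have hrpownn : (0:ℝ) ≤ (1 + ‖x‖) ^ (-r) := Real.rpow_nonneg h1x.le _
    rcases lt_or_ge ‖x‖ 2 with hx | hx
    · have h3 : (1 + ‖x‖ : ℝ) ≤ 3 := by linarith
      have e1 : (3:ℝ) ^ (-r) ≤ (1 + ‖x‖) ^ (-r) :=
        Real.rpow_le_rpow_of_nonpos h1x h3 (neg_nonpos.mpr hrpos.le)
      have e2 : K = K * 3 ^ r * 3 ^ (-r) := by
        rw [mul_assoc, ← Real.rpow_add (by norm_num : (0:ℝ) < 3)]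
        simp
      calc ‖fracLap N t (torsion N s) x‖ ≤ K := hKb x
      _ = K * 3 ^ r * 3 ^ (-r) := e2
      _ ≤ K * 3 ^ r * (1 + ‖x‖) ^ (-r) :=
          mul_le_mul_of_nonneg_left e1 (by positivity)
      _ ≤ C * (1 + ‖x‖) ^ (-r) :=
          mul_le_mul_of_nonneg_right (le_add_of_nonneg_right hc20) hrpownn
    · have hd := TorsionAux.fracLap_decay hN hs0 ht hx
      have h4 : ((1 + ‖x‖) / 4 : ℝ) ≤ ‖x‖ / 2 := by linarith
      have e1 : ((‖x‖:ℝ) / 2) ^ (-r) ≤ ((1 + ‖x‖) / 4) ^ (-r) :=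
        Real.rpow_le_rpow_of_nonpos (by positivity) h4 (neg_nonpos.mpr hrpos.le)
      have e2 : (((1 + ‖x‖) / 4 : ℝ)) ^ (-r) = 4 ^ r * (1 + ‖x‖) ^ (-r) := by
        rw [Real.div_rpow h1x.le (by norm_num), Real.rpow_neg (by norm_num : (0:ℝ) ≤ 4),
          div_eq_mul_inv, inv_inv, mul_comm]
      calc ‖fracLap N t (torsion N s) x‖
          ≤ TorsionAux.cc N s * V * (‖x‖ / 2) ^ (-r) := hd
      _ ≤ TorsionAux.cc N s * V * (4 ^ r * (1 + ‖x‖) ^ (-r)) := by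
          rw [← e2]
          exact mul_le_mul_of_nonneg_left e1 (by positivity)
      _ = c2 * (1 + ‖x‖) ^ (-r) := by rw [hc2]; ring
      _ ≤ C * (1 + ‖x‖) ^ (-r) :=
          mul_le_mul_of_nonneg_right (le_add_of_nonneg_left (by positivity)) hrpownn
  intro p hp1
  by_cases hptop : p = ∞
  · subst hptop
    exact memLp_top_of_bound hmeas K (ae_of_all _ hKb)
  · have hp0 : p ≠ 0 := (zero_lt_one.trans_le hp1).ne'
    have hq1 : 1 ≤ p.toReal := by
      have := ENNReal.toReal_mono hptop hp1
      simpa using this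
    have hq0 : (0:ℝ) < p.toReal := lt_of_lt_of_le one_pos hq1
    have hHmem : MemLp (fun x : E N => C * (1 + ‖x‖) ^ (-r)) p volume := by
      have hHm : AEStronglyMeasurable (fun x : E N => C * (1 + ‖x‖) ^ (-r)) volume := by
        apply Measurable.aestronglyMeasurable
        fun_prop
      rw [← memLp_norm_rpow_iff hHm hp0 hptop, ENNReal.div_self hp0 hptop,
        memLp_one_iff_integrable]
      have heq : (fun x : E N => ‖C * (1 + ‖x‖) ^ (-r)‖ ^ p.toReal)
          = fun x : E N => |C| ^ p.toReal * (1 + ‖x‖) ^ (-(r * p.toReal)) := by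
        funext x
        have h1x : (0:ℝ) < 1 + ‖x‖ := by positivity
        rw [Real.norm_eq_abs, abs_mul, abs_of_nonneg (Real.rpow_nonneg h1x.le _),
          Real.mul_rpow (abs_nonneg _) (Real.rpow_nonneg h1x.le _),
          ← Real.rpow_mul h1x.le, neg_mul]
      rw [heq]
      apply Integrable.const_mul
      apply integrable_one_add_norm
      have hfr : ((finrank ℝ (E N) : ℝ)) = (N:ℝ) := by simp
      rw [hfr]
      nlinarith [mul_nonneg hrpos.le (sub_nonneg.mpr hq1)]
    refine MemLp.of_le hHmem hmeas (ae_of_all _ (fun x => ?_))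
    calc ‖fracLap N t (torsion N s) x‖ ≤ C * (1 + ‖x‖) ^ (-r) := hbH x
    _ ≤ ‖C * (1 + ‖x‖) ^ (-r)‖ := le_abs_self _

end
end

section
/- Let s ∈ (0,1), s ≤ t < min{1,2s}, and set R := 1/3 + (4/3)(diam(Ω) + dist(0, Ω)). Then there exists a constant C > 0, depending only on N, s, t, Ω and the constant 𝒞₁ of the Green-function upper bound, such that: (a) for every y ∈ Ω and every x ∈ B_R(0) \ Ω with δ(x) > 0, ∫_Ω G(z,y) |x−z|^{−(N+t)} dz ≤ C |x−y|^{−(N−2s)} ( |x−y|^{−t} + δ(x)^{−t} ); and (b) for every y ∈ Ω and every x ∈ ℝ^N \ B_R(0), ∫_Ω G(z,y) |x−z|^{−(N+t)} dz ≤ C (1 + |x|)^{−(N+t)}. (For x outside Ω this integral equals |(−Δ)^{t/2}_x G(x,y)|, normalization constants being omitted.) -/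
open MeasureTheory Metric Set Real
open scoped ENNReal

noncomputable section

/-- Distance to the boundary of `Ω`: `δ(x) = dist(x, ∂Ω)`. -/
def dd {N : ℕ} (Ω : Set (E N)) (x : E N) : ℝ := Metric.infDist x (frontier Ω)

/-- The solution of the fractional Poisson problem: `u(x) = ∫_Ω G(x,y) f(y) dy`. -/
def sol {N : ℕ} (Ω : Set (E N)) (G : E N → E N → ℝ) (f : E N → ℝ) (x : E N) : ℝ :=
  ∫ y in Ω, G x y * f y

/-- The fractional Laplacian `(-Δ)^{τ/2} u` (normalization constant omitted). -/
def fLap {N : ℕ} (τ : ℝ) (u : E N → ℝ) (x : E N) : ℝ :=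
  ∫ z, (u x - u z) * ‖x - z‖ ^ (-((N : ℝ) + τ))

/-- The Riesz fractional gradient `∇^τ u` (normalization constant omitted). -/
def rGrad {N : ℕ} (τ : ℝ) (u : E N → ℝ) (x : E N) : E N :=
  ∫ z, ((u x - u z) * ‖x - z‖ ^ (-((N : ℝ) + τ + 1))) • (x - z)

lemma div_rpow_eq {u c e : ℝ} (hu : 0 ≤ u) (hc : 0 < c) :
    (u / c) ^ e = u ^ e * c ^ (-e) := by
  rw [Real.div_rpow hu hc.le, Real.rpow_neg hc.le, div_eq_mul_inv]

lemma vol_closedBall (N : ℕ) (x₀ : E N) {ρ : ℝ} (hρ : 0 ≤ ρ) :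
    volume (Metric.closedBall x₀ ρ) =
      ENNReal.ofReal (ρ ^ ((N : ℝ))) * volume (Metric.ball (0 : E N) 1) := by
  rw [MeasureTheory.Measure.addHaar_closedBall volume x₀ hρ, finrank_euclideanSpace_fin,
    ← Real.rpow_natCast ρ N]

lemma vol_singleton {N : ℕ} (hN : 0 < N) (x₀ : E N) : volume ({x₀} : Set (E N)) = 0 := by
  have h := vol_closedBall N x₀ (le_refl 0)
  have h0 : (0:ℝ) ^ ((N:ℝ)) = 0 := Real.zero_rpow (by positivity)
  have : volume (Metric.closedBall x₀ 0) = 0 := by rw [h, h0]; simp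
  exact le_antisymm (le_trans (measure_mono (by simp)) this.le) zero_le

lemma lint_ball_rpow {N : ℕ} (hN : 0 < N) {a : ℝ} (ha1 : -(N : ℝ) < a) (ha2 : a < 0) :
    ∃ C : ℝ≥0∞, C ≠ ⊤ ∧ ∀ (x₀ : E N) (r : ℝ), 0 < r →
      ∫⁻ z in Metric.ball x₀ r, ENNReal.ofReal (‖z - x₀‖ ^ a) ≤
        C * ENNReal.ofReal (r ^ ((N : ℝ) + a)) := by
  set v := volume (Metric.ball (0 : E N) 1) with hv
  have hvne : v ≠ ⊤ := measure_ball_lt_top.ne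
  have hNa : 0 < (N : ℝ) + a := by linarith
  set q : ℝ≥0∞ := ENNReal.ofReal ((2 : ℝ) ^ (-((N : ℝ) + a))) with hqdef
  have hq1 : q < 1 := by
    rw [hqdef]
    have h1 : (2 : ℝ) ^ (-((N : ℝ) + a)) < 1 :=
      Real.rpow_lt_one_of_one_lt_of_neg one_lt_two (by linarith)
    calc ENNReal.ofReal ((2:ℝ) ^ (-((N : ℝ) + a))) < ENNReal.ofReal 1 :=
          (ENNReal.ofReal_lt_ofReal_iff one_pos).mpr h1
      _ = 1 := ENNReal.ofReal_one
  refine ⟨ENNReal.ofReal ((2 : ℝ) ^ (-a)) * v * (1 - q)⁻¹, ?_, ?_⟩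
  · exact ENNReal.mul_ne_top (ENNReal.mul_ne_top ENNReal.ofReal_ne_top hvne)
      (ENNReal.inv_ne_top.mpr (tsub_pos_iff_lt.mpr hq1).ne')
  intro x₀ r hr
  set A : ℕ → Set (E N) := fun k =>
    Metric.closedBall x₀ (r / 2 ^ k) \ Metric.ball x₀ (r / 2 ^ (k + 1)) with hA
  have hcover : Metric.ball x₀ r ⊆ {x₀} ∪ ⋃ k, A k := by
    intro z hz
    rcases eq_or_ne z x₀ with h | h
    · exact Or.inl h
    · right
      have hd : 0 < dist z x₀ := dist_pos.mpr h
      have hdr : dist z x₀ < r := mem_ball.mp hz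
      have hex : ∃ k : ℕ, r / 2 ^ (k + 1) < dist z x₀ := by
        obtain ⟨n, hn⟩ := pow_unbounded_of_one_lt (r / dist z x₀) one_lt_two
        refine ⟨n, ?_⟩
        rw [div_lt_iff₀ hd] at hn
        rw [div_lt_iff₀ (by positivity)]
        calc r < dist z x₀ * 2 ^ n := by linarith [hn]
          _ ≤ dist z x₀ * 2 ^ (n + 1) := by
              have : (2:ℝ) ^ n ≤ 2 ^ (n+1) := by
                apply pow_le_pow_right₀ one_le_two (by omega)
              nlinarith
      classical
      set k₀ := Nat.find hex with hk₀
      have hspec : r / 2 ^ (k₀ + 1) < dist z x₀ := Nat.find_spec hex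
      refine mem_iUnion.mpr ⟨k₀, ?_, ?_⟩
      · rw [mem_closedBall]
        rcases Nat.eq_zero_or_pos k₀ with h0 | hpos
        · rw [h0]; simpa using hdr.le
        · obtain ⟨m, hm⟩ : ∃ m, k₀ = m + 1 := ⟨k₀ - 1, by omega⟩
          have := Nat.find_min hex (by omega : m < k₀)
          rw [hm]; push_neg at this; exact this
      · rw [mem_ball]; push_neg; exact hspec.le
  have hstep : ∀ k : ℕ, ∫⁻ z in A k, ENNReal.ofReal (‖z - x₀‖ ^ a) ≤
      ENNReal.ofReal ((r / 2 ^ (k+1)) ^ a) * (ENNReal.ofReal ((r / 2 ^ k) ^ ((N:ℝ))) * v) := by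
    intro k
    have hrk1 : (0:ℝ) < r / 2 ^ (k+1) := by positivity
    have hbound : ∀ z ∈ A k, ENNReal.ofReal (‖z - x₀‖ ^ a) ≤
        ENNReal.ofReal ((r / 2 ^ (k+1)) ^ a) := by
      intro z hz
      apply ENNReal.ofReal_le_ofReal
      have hzd : r / 2 ^ (k+1) ≤ dist z x₀ := by
        have := hz.2; rw [mem_ball] at this; push_neg at this; exact this
      rw [← dist_eq_norm]
      exact rpow_le_rpow_of_nonpos hrk1 hzd ha2.le
    calc ∫⁻ z in A k, ENNReal.ofReal (‖z - x₀‖ ^ a)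
        ≤ ∫⁻ _ in A k, ENNReal.ofReal ((r / 2 ^ (k+1)) ^ a) :=
          setLIntegral_mono measurable_const hbound
      _ = ENNReal.ofReal ((r / 2 ^ (k+1)) ^ a) * volume (A k) := setLIntegral_const _ _
      _ ≤ ENNReal.ofReal ((r / 2 ^ (k+1)) ^ a) * volume (Metric.closedBall x₀ (r / 2 ^ k)) :=
          mul_le_mul_right (measure_mono diff_subset) _
      _ = _ := by rw [vol_closedBall N x₀ (by positivity : (0:ℝ) ≤ r / 2 ^ k)]
  have F : ∀ k : ℕ, (r / 2 ^ (k+1)) ^ a * (r / 2 ^ k) ^ ((N:ℝ)) =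
      (r ^ ((N:ℝ) + a) * (2:ℝ) ^ (-a)) * ((2:ℝ) ^ (-((N:ℝ) + a))) ^ ((k:ℝ)) := by
    intro k
    have h2k : (0:ℝ) < 2 ^ k := by positivity
    have h2k1 : (0:ℝ) < 2 ^ (k+1) := by positivity
    rw [Real.rpow_def_of_pos (by positivity), Real.rpow_def_of_pos (by positivity),
      Real.rpow_def_of_pos hr, Real.rpow_def_of_pos two_pos,
      Real.rpow_def_of_pos (Real.rpow_pos_of_pos two_pos _),
      Real.log_rpow two_pos, Real.log_div hr.ne' h2k1.ne', Real.log_div hr.ne' h2k.ne',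
      Real.log_pow, Real.log_pow, ← Real.exp_add, ← Real.exp_add, ← Real.exp_add]
    congr 1
    push_cast
    ring
  calc ∫⁻ z in Metric.ball x₀ r, ENNReal.ofReal (‖z - x₀‖ ^ a)
      ≤ ∫⁻ z in {x₀} ∪ ⋃ k, A k, ENNReal.ofReal (‖z - x₀‖ ^ a) := lintegral_mono_set hcover
    _ ≤ (∫⁻ z in ({x₀} : Set (E N)), ENNReal.ofReal (‖z - x₀‖ ^ a)) +
        ∫⁻ z in ⋃ k, A k, ENNReal.ofReal (‖z - x₀‖ ^ a) := lintegral_union_le _ _ _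
    _ ≤ 0 + ∑' k, ∫⁻ z in A k, ENNReal.ofReal (‖z - x₀‖ ^ a) := by
        gcongr
        · rw [Measure.restrict_eq_zero.mpr (vol_singleton hN x₀), lintegral_zero_measure]
        · exact lintegral_iUnion_le _ _
    _ = ∑' k, ∫⁻ z in A k, ENNReal.ofReal (‖z - x₀‖ ^ a) := zero_add _
    _ ≤ ∑' k, ENNReal.ofReal ((r / 2 ^ (k+1)) ^ a) * (ENNReal.ofReal ((r / 2 ^ k) ^ ((N:ℝ))) * v) :=
        ENNReal.tsum_le_tsum hstep
    _ = ∑' k, (ENNReal.ofReal (r ^ ((N:ℝ) + a) * (2:ℝ) ^ (-a)) * q ^ k) * v := by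
        congr 1; funext k
        rw [← mul_assoc, ← ENNReal.ofReal_mul (by positivity), F k,
          ENNReal.ofReal_mul (by positivity)]
        congr 2
        rw [hqdef, ← ENNReal.ofReal_rpow_of_pos (Real.rpow_pos_of_pos two_pos _),
          ENNReal.rpow_natCast]
    _ = ENNReal.ofReal (r ^ ((N:ℝ) + a) * (2:ℝ) ^ (-a)) * (1 - q)⁻¹ * v := by
        rw [ENNReal.tsum_mul_right, ENNReal.tsum_mul_left, ENNReal.tsum_geometric]
    _ = ENNReal.ofReal ((2 : ℝ) ^ (-a)) * v * (1 - q)⁻¹ * ENNReal.ofReal (r ^ ((N:ℝ) + a)) := by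
        rw [ENNReal.ofReal_mul (by positivity)]
        ring

lemma lint_compl_ball_rpow {N : ℕ} (hN : 0 < N) {b : ℝ} (hb : b < -(N : ℝ)) :
    ∃ C : ℝ≥0∞, C ≠ ⊤ ∧ ∀ (x₀ : E N) (r : ℝ), 0 < r →
      ∫⁻ z in (Metric.ball x₀ r)ᶜ, ENNReal.ofReal (‖z - x₀‖ ^ b) ≤
        C * ENNReal.ofReal (r ^ ((N : ℝ) + b)) := by
  set v := volume (Metric.ball (0 : E N) 1) with hv
  have hvne : v ≠ ⊤ := measure_ball_lt_top.ne
  have hNb : (N : ℝ) + b < 0 := by linarith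
  set q : ℝ≥0∞ := ENNReal.ofReal ((2 : ℝ) ^ ((N : ℝ) + b)) with hqdef
  have hq1 : q < 1 := by
    rw [hqdef]
    have h1 : (2 : ℝ) ^ ((N : ℝ) + b) < 1 :=
      Real.rpow_lt_one_of_one_lt_of_neg one_lt_two hNb
    calc ENNReal.ofReal ((2:ℝ) ^ ((N : ℝ) + b)) < ENNReal.ofReal 1 :=
          (ENNReal.ofReal_lt_ofReal_iff one_pos).mpr h1
      _ = 1 := ENNReal.ofReal_one
  refine ⟨ENNReal.ofReal ((2 : ℝ) ^ ((N:ℝ))) * v * (1 - q)⁻¹, ?_, ?_⟩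
  · exact ENNReal.mul_ne_top (ENNReal.mul_ne_top ENNReal.ofReal_ne_top hvne)
      (ENNReal.inv_ne_top.mpr (tsub_pos_iff_lt.mpr hq1).ne')
  intro x₀ r hr
  set A : ℕ → Set (E N) := fun k =>
    Metric.closedBall x₀ (r * 2 ^ (k + 1)) \ Metric.ball x₀ (r * 2 ^ k) with hA
  have hcover : (Metric.ball x₀ r)ᶜ ⊆ ⋃ k, A k := by
    intro z hz
    have hd : r ≤ dist z x₀ := by
      rw [mem_compl_iff, mem_ball] at hz; push_neg at hz; exact hz
    have hdpos : 0 < dist z x₀ := lt_of_lt_of_le hr hd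
    have hex : ∃ k : ℕ, dist z x₀ < r * 2 ^ (k + 1) := by
      obtain ⟨n, hn⟩ := pow_unbounded_of_one_lt (dist z x₀ / r) one_lt_two
      refine ⟨n, ?_⟩
      rw [div_lt_iff₀ hr] at hn
      calc dist z x₀ < 2 ^ n * r := hn
        _ ≤ r * 2 ^ (n + 1) := by
            have : (2:ℝ) ^ n ≤ 2 ^ (n+1) := pow_le_pow_right₀ one_le_two (by omega)
            nlinarith
    classical
    set k₀ := Nat.find hex with hk₀
    have hspec : dist z x₀ < r * 2 ^ (k₀ + 1) := Nat.find_spec hex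
    refine mem_iUnion.mpr ⟨k₀, ?_, ?_⟩
    · exact mem_closedBall.mpr hspec.le
    · rw [mem_ball]; push_neg
      rcases Nat.eq_zero_or_pos k₀ with h0 | hpos
      · rw [h0]; simpa using hd
      · obtain ⟨m, hm⟩ : ∃ m, k₀ = m + 1 := ⟨k₀ - 1, by omega⟩
        have := Nat.find_min hex (by omega : m < k₀)
        push_neg at this
        rw [hm]; exact this
  have hstep : ∀ k : ℕ, ∫⁻ z in A k, ENNReal.ofReal (‖z - x₀‖ ^ b) ≤
      ENNReal.ofReal ((r * 2 ^ k) ^ b) * (ENNReal.ofReal ((r * 2 ^ (k+1)) ^ ((N:ℝ))) * v) := by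
    intro k
    have hrk : (0:ℝ) < r * 2 ^ k := by positivity
    have hbound : ∀ z ∈ A k, ENNReal.ofReal (‖z - x₀‖ ^ b) ≤
        ENNReal.ofReal ((r * 2 ^ k) ^ b) := by
      intro z hz
      apply ENNReal.ofReal_le_ofReal
      have hzd : r * 2 ^ k ≤ dist z x₀ := by
        have := hz.2; rw [mem_ball] at this; push_neg at this; exact this
      rw [← dist_eq_norm]
      exact rpow_le_rpow_of_nonpos hrk hzd
        (by nlinarith [Nat.cast_nonneg (α := ℝ) N] : b ≤ 0)
    calc ∫⁻ z in A k, ENNReal.ofReal (‖z - x₀‖ ^ b)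
        ≤ ∫⁻ _ in A k, ENNReal.ofReal ((r * 2 ^ k) ^ b) :=
          setLIntegral_mono measurable_const hbound
      _ = ENNReal.ofReal ((r * 2 ^ k) ^ b) * volume (A k) := setLIntegral_const _ _
      _ ≤ ENNReal.ofReal ((r * 2 ^ k) ^ b) * volume (Metric.closedBall x₀ (r * 2 ^ (k+1))) :=
          mul_le_mul_right (measure_mono diff_subset) _
      _ = _ := by rw [vol_closedBall N x₀ (by positivity : (0:ℝ) ≤ r * 2 ^ (k+1))]
  have F : ∀ k : ℕ, (r * 2 ^ k) ^ b * (r * 2 ^ (k+1)) ^ ((N:ℝ)) =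
      (r ^ ((N:ℝ) + b) * (2:ℝ) ^ ((N:ℝ))) * ((2:ℝ) ^ ((N:ℝ) + b)) ^ ((k:ℝ)) := by
    intro k
    have h2k : (0:ℝ) < 2 ^ k := by positivity
    have h2k1 : (0:ℝ) < 2 ^ (k+1) := by positivity
    rw [Real.rpow_def_of_pos (by positivity), Real.rpow_def_of_pos (by positivity),
      Real.rpow_def_of_pos hr, Real.rpow_def_of_pos two_pos,
      Real.rpow_def_of_pos (Real.rpow_pos_of_pos two_pos _),
      Real.log_rpow two_pos, Real.log_mul hr.ne' h2k1.ne', Real.log_mul hr.ne' h2k.ne',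
      Real.log_pow, Real.log_pow, ← Real.exp_add, ← Real.exp_add, ← Real.exp_add]
    congr 1
    push_cast
    ring
  calc ∫⁻ z in (Metric.ball x₀ r)ᶜ, ENNReal.ofReal (‖z - x₀‖ ^ b)
      ≤ ∫⁻ z in ⋃ k, A k, ENNReal.ofReal (‖z - x₀‖ ^ b) := lintegral_mono_set hcover
    _ ≤ ∑' k, ∫⁻ z in A k, ENNReal.ofReal (‖z - x₀‖ ^ b) := lintegral_iUnion_le _ _
    _ ≤ ∑' k, ENNReal.ofReal ((r * 2 ^ k) ^ b) * (ENNReal.ofReal ((r * 2 ^ (k+1)) ^ ((N:ℝ))) * v) :=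
        ENNReal.tsum_le_tsum hstep
    _ = ∑' k, (ENNReal.ofReal (r ^ ((N:ℝ) + b) * (2:ℝ) ^ ((N:ℝ))) * q ^ k) * v := by
        congr 1; funext k
        rw [← mul_assoc, ← ENNReal.ofReal_mul (by positivity), F k,
          ENNReal.ofReal_mul (by positivity)]
        congr 2
        rw [hqdef, ← ENNReal.ofReal_rpow_of_pos (Real.rpow_pos_of_pos two_pos _),
          ENNReal.rpow_natCast]
    _ = ENNReal.ofReal (r ^ ((N:ℝ) + b) * (2:ℝ) ^ ((N:ℝ))) * (1 - q)⁻¹ * v := by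
        rw [ENNReal.tsum_mul_right, ENNReal.tsum_mul_left, ENNReal.tsum_geometric]
    _ = ENNReal.ofReal ((2 : ℝ) ^ ((N:ℝ))) * v * (1 - q)⁻¹ * ENNReal.ofReal (r ^ ((N:ℝ) + b)) := by
        rw [ENNReal.ofReal_mul (by positivity)]
        ring

/-- Riesz composition upper bound. -/
lemma riesz_bound {N : ℕ} (hN : 0 < N) {s : ℝ} (hs0 : 0 < s) (h2s : 2 * s < N) :
    ∃ C : ℝ≥0∞, C ≠ ⊤ ∧ ∀ (Ω : Set (E N)) (x y : E N), x ≠ y →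
      ∫⁻ z in Ω, ENNReal.ofReal (‖z - y‖ ^ (s - (N:ℝ)) * ‖z - x‖ ^ (s - (N:ℝ))) ≤
        C * ENNReal.ofReal (‖x - y‖ ^ (2 * s - (N:ℝ))) := by
  have hsN : s < N := by linarith
  obtain ⟨Cb, hCb, hCbball⟩ := lint_ball_rpow hN (a := s - (N:ℝ)) (by linarith) (by linarith)
  obtain ⟨Cc, hCc, hCcball⟩ :=
    lint_compl_ball_rpow hN (b := (s - (N:ℝ)) + (s - (N:ℝ))) (by linarith)
  refine ⟨(Cb + Cb + ENNReal.ofReal ((3:ℝ) ^ ((N:ℝ) - s)) * Cc) *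
      ENNReal.ofReal ((2:ℝ) ^ ((N:ℝ) - 2 * s)), ?_, ?_⟩
  · exact ENNReal.mul_ne_top (by
      refine ENNReal.add_ne_top.mpr ⟨ENNReal.add_ne_top.mpr ⟨hCb, hCb⟩, ?_⟩
      exact ENNReal.mul_ne_top ENNReal.ofReal_ne_top hCc) ENNReal.ofReal_ne_top
  intro Ω x y hxy
  set r := ‖x - y‖ with hrdef
  have hr : 0 < r := norm_pos_iff.mpr (sub_ne_zero.mpr hxy)
  set ρ := r / 2 with hρdef
  have hρ : 0 < ρ := by positivity
  have hmru : Measurable fun u : ℝ => u ^ (s - (N:ℝ)) := by measurability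
  have hmx : Measurable fun z : E N => ENNReal.ofReal (‖z - x‖ ^ (s - (N:ℝ))) :=
    ENNReal.measurable_ofReal.comp (hmru.comp (measurable_id.sub measurable_const).norm)
  have hmy : Measurable fun z : E N => ENNReal.ofReal (‖z - y‖ ^ (s - (N:ℝ))) :=
    ENNReal.measurable_ofReal.comp (hmru.comp (measurable_id.sub measurable_const).norm)
  have hmyb : Measurable fun z : E N =>
      ENNReal.ofReal (‖z - y‖ ^ ((s - (N:ℝ)) + (s - (N:ℝ)))) := by
    have : Measurable fun u : ℝ => u ^ ((s - (N:ℝ)) + (s - (N:ℝ))) := by measurability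
    exact ENNReal.measurable_ofReal.comp (this.comp (measurable_id.sub measurable_const).norm)
  -- region 1 : ball x ρ
  have hJ1 : ∫⁻ z in Metric.ball x ρ,
      ENNReal.ofReal (‖z - y‖ ^ (s - (N:ℝ)) * ‖z - x‖ ^ (s - (N:ℝ))) ≤
      Cb * ENNReal.ofReal (ρ ^ (2 * s - (N:ℝ))) := by
    have hpt : ∀ z ∈ Metric.ball x ρ,
        ENNReal.ofReal (‖z - y‖ ^ (s - (N:ℝ)) * ‖z - x‖ ^ (s - (N:ℝ))) ≤
        ENNReal.ofReal (ρ ^ (s - (N:ℝ))) * ENNReal.ofReal (‖z - x‖ ^ (s - (N:ℝ))) := by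
      intro z hz
      have hzx : dist z x < ρ := mem_ball.mp hz
      have h1 : ρ ≤ ‖z - y‖ := by
        have htr : dist x y ≤ dist x z + dist z y := dist_triangle x z y
        have e1 : dist x z = dist z x := dist_comm x z
        have e2 : ‖z - y‖ = dist z y := dist_eq_norm z y
        have e3 : r = dist x y := dist_eq_norm x y
        rw [e2]; linarith
      rw [← ENNReal.ofReal_mul (rpow_nonneg hρ.le _)]
      exact ENNReal.ofReal_le_ofReal (mul_le_mul_of_nonneg_right
        (rpow_le_rpow_of_nonpos hρ h1 (by linarith)) (rpow_nonneg (norm_nonneg _) _))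
    calc ∫⁻ z in Metric.ball x ρ,
          ENNReal.ofReal (‖z - y‖ ^ (s - (N:ℝ)) * ‖z - x‖ ^ (s - (N:ℝ)))
        ≤ ∫⁻ z in Metric.ball x ρ,
            ENNReal.ofReal (ρ ^ (s - (N:ℝ))) * ENNReal.ofReal (‖z - x‖ ^ (s - (N:ℝ))) :=
          setLIntegral_mono (measurable_const.mul hmx) hpt
      _ = ENNReal.ofReal (ρ ^ (s - (N:ℝ))) *
            ∫⁻ z in Metric.ball x ρ, ENNReal.ofReal (‖z - x‖ ^ (s - (N:ℝ))) :=
          lintegral_const_mul' _ _ ENNReal.ofReal_ne_top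
      _ ≤ ENNReal.ofReal (ρ ^ (s - (N:ℝ))) *
            (Cb * ENNReal.ofReal (ρ ^ ((N:ℝ) + (s - (N:ℝ))))) :=
          mul_le_mul_right (hCbball x ρ hρ) _
      _ = Cb * ENNReal.ofReal (ρ ^ (2 * s - (N:ℝ))) := by
          rw [← mul_assoc, mul_comm (ENNReal.ofReal _) Cb, mul_assoc,
            ← ENNReal.ofReal_mul (rpow_nonneg hρ.le _), ← Real.rpow_add hρ]
          congr 2
          ring
  -- region 2 : ball y ρ
  have hJ2 : ∫⁻ z in Metric.ball y ρ,
      ENNReal.ofReal (‖z - y‖ ^ (s - (N:ℝ)) * ‖z - x‖ ^ (s - (N:ℝ))) ≤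
      Cb * ENNReal.ofReal (ρ ^ (2 * s - (N:ℝ))) := by
    have hpt : ∀ z ∈ Metric.ball y ρ,
        ENNReal.ofReal (‖z - y‖ ^ (s - (N:ℝ)) * ‖z - x‖ ^ (s - (N:ℝ))) ≤
        ENNReal.ofReal (ρ ^ (s - (N:ℝ))) * ENNReal.ofReal (‖z - y‖ ^ (s - (N:ℝ))) := by
      intro z hz
      have hzy : dist z y < ρ := mem_ball.mp hz
      have h1 : ρ ≤ ‖z - x‖ := by
        have htr : dist x y ≤ dist x z + dist z y := dist_triangle x z y
        have e1 : dist x z = dist z x := dist_comm x z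
        have e2 : ‖z - x‖ = dist z x := dist_eq_norm z x
        have e3 : r = dist x y := dist_eq_norm x y
        rw [e2]; linarith
      calc ENNReal.ofReal (‖z - y‖ ^ (s - (N:ℝ)) * ‖z - x‖ ^ (s - (N:ℝ)))
          ≤ ENNReal.ofReal (‖z - y‖ ^ (s - (N:ℝ)) * ρ ^ (s - (N:ℝ))) :=
            ENNReal.ofReal_le_ofReal (mul_le_mul_of_nonneg_left
              (rpow_le_rpow_of_nonpos hρ h1 (by linarith))
              (rpow_nonneg (norm_nonneg _) _))
        _ = ENNReal.ofReal (ρ ^ (s - (N:ℝ))) * ENNReal.ofReal (‖z - y‖ ^ (s - (N:ℝ))) := by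
            rw [← ENNReal.ofReal_mul (rpow_nonneg hρ.le _)]
            rw [mul_comm]
    calc ∫⁻ z in Metric.ball y ρ,
          ENNReal.ofReal (‖z - y‖ ^ (s - (N:ℝ)) * ‖z - x‖ ^ (s - (N:ℝ)))
        ≤ ∫⁻ z in Metric.ball y ρ,
            ENNReal.ofReal (ρ ^ (s - (N:ℝ))) * ENNReal.ofReal (‖z - y‖ ^ (s - (N:ℝ))) :=
          setLIntegral_mono (measurable_const.mul hmy) hpt
      _ = ENNReal.ofReal (ρ ^ (s - (N:ℝ))) *
            ∫⁻ z in Metric.ball y ρ, ENNReal.ofReal (‖z - y‖ ^ (s - (N:ℝ))) :=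
          lintegral_const_mul' _ _ ENNReal.ofReal_ne_top
      _ ≤ ENNReal.ofReal (ρ ^ (s - (N:ℝ))) *
            (Cb * ENNReal.ofReal (ρ ^ ((N:ℝ) + (s - (N:ℝ))))) :=
          mul_le_mul_right (hCbball y ρ hρ) _
      _ = Cb * ENNReal.ofReal (ρ ^ (2 * s - (N:ℝ))) := by
          rw [← mul_assoc, mul_comm (ENNReal.ofReal _) Cb, mul_assoc,
            ← ENNReal.ofReal_mul (rpow_nonneg hρ.le _), ← Real.rpow_add hρ]
          congr 2
          ring
  -- region 3 : complement
  have hJ3 : ∫⁻ z in (Metric.ball x ρ ∪ Metric.ball y ρ)ᶜ,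
      ENNReal.ofReal (‖z - y‖ ^ (s - (N:ℝ)) * ‖z - x‖ ^ (s - (N:ℝ))) ≤
      ENNReal.ofReal ((3:ℝ) ^ ((N:ℝ) - s)) * Cc * ENNReal.ofReal (ρ ^ (2 * s - (N:ℝ))) := by
    have hpt : ∀ z ∈ (Metric.ball x ρ ∪ Metric.ball y ρ)ᶜ,
        ENNReal.ofReal (‖z - y‖ ^ (s - (N:ℝ)) * ‖z - x‖ ^ (s - (N:ℝ))) ≤
        ENNReal.ofReal ((3:ℝ) ^ ((N:ℝ) - s)) *
          ENNReal.ofReal (‖z - y‖ ^ ((s - (N:ℝ)) + (s - (N:ℝ)))) := by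
      intro z hz
      rw [mem_compl_iff, mem_union] at hz
      push_neg at hz
      have hzx : ρ ≤ dist z x := by have := hz.1; rw [mem_ball] at this; linarith [not_lt.mp this]
      have hzy : ρ ≤ dist z y := by have := hz.2; rw [mem_ball] at this; linarith [not_lt.mp this]
      have hzy0 : 0 < ‖z - y‖ := by rw [← dist_eq_norm]; linarith
      have h3 : ‖z - y‖ / 3 ≤ ‖z - x‖ := by
        have htr : dist z y ≤ dist z x + dist x y := dist_triangle z x y
        have hrd : r = dist x y := dist_eq_norm x y
        have e1 : ‖z - y‖ = dist z y := dist_eq_norm z y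
        have e2 : ‖z - x‖ = dist z x := dist_eq_norm z x
        rw [e1, e2]
        linarith
      have h30 : (0:ℝ) < ‖z - y‖ / 3 := by linarith
      have hb : ‖z - x‖ ^ (s - (N:ℝ)) ≤ (‖z - y‖ / 3) ^ (s - (N:ℝ)) :=
        rpow_le_rpow_of_nonpos h30 h3 (by linarith)
      have hid : (‖z - y‖ / 3) ^ (s - (N:ℝ)) =
          ‖z - y‖ ^ (s - (N:ℝ)) * (3:ℝ) ^ ((N:ℝ) - s) := by
        rw [div_rpow_eq (norm_nonneg _) (by norm_num : (0:ℝ) < 3), neg_sub]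
      calc ENNReal.ofReal (‖z - y‖ ^ (s - (N:ℝ)) * ‖z - x‖ ^ (s - (N:ℝ)))
          ≤ ENNReal.ofReal (‖z - y‖ ^ (s - (N:ℝ)) *
              (‖z - y‖ ^ (s - (N:ℝ)) * (3:ℝ) ^ ((N:ℝ) - s))) := by
            apply ENNReal.ofReal_le_ofReal
            rw [← hid]
            exact mul_le_mul_of_nonneg_left hb (rpow_nonneg (norm_nonneg _) _)
        _ = ENNReal.ofReal ((3:ℝ) ^ ((N:ℝ) - s)) *
              ENNReal.ofReal (‖z - y‖ ^ ((s - (N:ℝ)) + (s - (N:ℝ)))) := by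
            rw [Real.rpow_add hzy0, ← ENNReal.ofReal_mul (by positivity)]
            congr 1
            ring
    calc ∫⁻ z in (Metric.ball x ρ ∪ Metric.ball y ρ)ᶜ,
          ENNReal.ofReal (‖z - y‖ ^ (s - (N:ℝ)) * ‖z - x‖ ^ (s - (N:ℝ)))
        ≤ ∫⁻ z in (Metric.ball x ρ ∪ Metric.ball y ρ)ᶜ,
            ENNReal.ofReal ((3:ℝ) ^ ((N:ℝ) - s)) *
              ENNReal.ofReal (‖z - y‖ ^ ((s - (N:ℝ)) + (s - (N:ℝ)))) :=
          setLIntegral_mono (measurable_const.mul hmyb) hpt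
      _ ≤ ∫⁻ z in (Metric.ball y ρ)ᶜ,
            ENNReal.ofReal ((3:ℝ) ^ ((N:ℝ) - s)) *
              ENNReal.ofReal (‖z - y‖ ^ ((s - (N:ℝ)) + (s - (N:ℝ)))) :=
          lintegral_mono_set (compl_subset_compl.mpr subset_union_right)
      _ = ENNReal.ofReal ((3:ℝ) ^ ((N:ℝ) - s)) *
            ∫⁻ z in (Metric.ball y ρ)ᶜ,
              ENNReal.ofReal (‖z - y‖ ^ ((s - (N:ℝ)) + (s - (N:ℝ)))) :=
          lintegral_const_mul' _ _ ENNReal.ofReal_ne_top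
      _ ≤ ENNReal.ofReal ((3:ℝ) ^ ((N:ℝ) - s)) *
            (Cc * ENNReal.ofReal (ρ ^ ((N:ℝ) + ((s - (N:ℝ)) + (s - (N:ℝ)))))) :=
          mul_le_mul_right (hCcball y ρ hρ) _
      _ = ENNReal.ofReal ((3:ℝ) ^ ((N:ℝ) - s)) * Cc * ENNReal.ofReal (ρ ^ (2 * s - (N:ℝ))) := by
          rw [mul_assoc]
          congr 3
          ring
  -- assemble
  have hcover : Ω ⊆ (Metric.ball x ρ ∪ Metric.ball y ρ) ∪
      (Metric.ball x ρ ∪ Metric.ball y ρ)ᶜ := by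
    rw [union_compl_self]; exact subset_univ _
  have hρr : ENNReal.ofReal (ρ ^ (2 * s - (N:ℝ))) =
      ENNReal.ofReal ((2:ℝ) ^ ((N:ℝ) - 2 * s)) * ENNReal.ofReal (r ^ (2 * s - (N:ℝ))) := by
    rw [hρdef, div_rpow_eq hr.le two_pos, ← ENNReal.ofReal_mul (by positivity)]
    have : -(2 * s - (N:ℝ)) = (N:ℝ) - 2 * s := by ring
    rw [this, mul_comm]
  calc ∫⁻ z in Ω, ENNReal.ofReal (‖z - y‖ ^ (s - (N:ℝ)) * ‖z - x‖ ^ (s - (N:ℝ)))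
      ≤ ∫⁻ z in (Metric.ball x ρ ∪ Metric.ball y ρ) ∪
          (Metric.ball x ρ ∪ Metric.ball y ρ)ᶜ,
          ENNReal.ofReal (‖z - y‖ ^ (s - (N:ℝ)) * ‖z - x‖ ^ (s - (N:ℝ))) :=
        lintegral_mono_set hcover
    _ ≤ (∫⁻ z in Metric.ball x ρ ∪ Metric.ball y ρ,
          ENNReal.ofReal (‖z - y‖ ^ (s - (N:ℝ)) * ‖z - x‖ ^ (s - (N:ℝ)))) +
        ∫⁻ z in (Metric.ball x ρ ∪ Metric.ball y ρ)ᶜ,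
          ENNReal.ofReal (‖z - y‖ ^ (s - (N:ℝ)) * ‖z - x‖ ^ (s - (N:ℝ))) :=
        lintegral_union_le _ _ _
    _ ≤ ((∫⁻ z in Metric.ball x ρ,
          ENNReal.ofReal (‖z - y‖ ^ (s - (N:ℝ)) * ‖z - x‖ ^ (s - (N:ℝ)))) +
        ∫⁻ z in Metric.ball y ρ,
          ENNReal.ofReal (‖z - y‖ ^ (s - (N:ℝ)) * ‖z - x‖ ^ (s - (N:ℝ)))) +
        ∫⁻ z in (Metric.ball x ρ ∪ Metric.ball y ρ)ᶜ,
          ENNReal.ofReal (‖z - y‖ ^ (s - (N:ℝ)) * ‖z - x‖ ^ (s - (N:ℝ))) := by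
        gcongr
        exact lintegral_union_le _ _ _
    _ ≤ (Cb * ENNReal.ofReal (ρ ^ (2 * s - (N:ℝ))) +
          Cb * ENNReal.ofReal (ρ ^ (2 * s - (N:ℝ)))) +
        ENNReal.ofReal ((3:ℝ) ^ ((N:ℝ) - s)) * Cc * ENNReal.ofReal (ρ ^ (2 * s - (N:ℝ))) := by
        gcongr
    _ = (Cb + Cb + ENNReal.ofReal ((3:ℝ) ^ ((N:ℝ) - s)) * Cc) *
          ENNReal.ofReal (ρ ^ (2 * s - (N:ℝ))) := by ring
    _ = (Cb + Cb + ENNReal.ofReal ((3:ℝ) ^ ((N:ℝ) - s)) * Cc) *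
          ENNReal.ofReal ((2:ℝ) ^ ((N:ℝ) - 2 * s)) * ENNReal.ofReal (r ^ (2 * s - (N:ℝ))) := by
        rw [hρr]; ring

/-- the segment from an interior point to an exterior point crosses the frontier. -/
lemma frontier_dist_bound {N : ℕ} (Ω : Set (E N)) (φ : E N → ℝ) (hφc : Continuous φ)
    (hΩeq : Ω = {x | φ x < 0}) (hfr : frontier Ω = {x | φ x = 0})
    {x z : E N} (hx : x ∉ Ω) (hz : z ∈ Ω) :
    Metric.infDist x (frontier Ω) ≤ ‖x - z‖ ∧
      Metric.infDist z (frontier Ω) ≤ ‖x - z‖ := by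
  have hφx : 0 ≤ φ x := by
    by_contra h
    exact hx (by rw [hΩeq]; exact lt_of_not_ge h)
  have hφz : φ z < 0 := by rw [hΩeq] at hz; exact hz
  set f : ℝ → ℝ := fun u => φ (x + u • (z - x)) with hf
  have hfc : Continuous f := hφc.comp (by continuity)
  have hf0 : f 0 = φ x := by simp [hf]
  have hf1 : f 1 = φ z := by simp [hf]
  have h0mem : (0:ℝ) ∈ Icc (f 1) (f 0) := by
    rw [hf0, hf1]; exact ⟨hφz.le, hφx⟩
  obtain ⟨u, hu01, hu0⟩ := intermediate_value_Icc' (by norm_num : (0:ℝ) ≤ 1)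
    hfc.continuousOn h0mem
  set p := x + u • (z - x) with hp
  have hpfr : p ∈ frontier Ω := by rw [hfr]; exact hu0
  have hxp : dist x p ≤ ‖x - z‖ := by
    rw [dist_eq_norm]
    have : x - p = (-u) • (z - x) := by rw [hp]; module
    rw [this, norm_smul]
    have : ‖z - x‖ = ‖x - z‖ := norm_sub_rev z x
    rw [this]
    have hu : |(-u)| ≤ 1 := by
      rw [abs_neg, abs_of_nonneg hu01.1]; exact hu01.2
    calc |(-u)| * ‖x - z‖ ≤ 1 * ‖x - z‖ :=
          mul_le_mul_of_nonneg_right hu (norm_nonneg _)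
      _ = ‖x - z‖ := one_mul _
  have hzp : dist z p ≤ ‖x - z‖ := by
    rw [dist_eq_norm]
    have : z - p = (1 - u) • (z - x) := by rw [hp]; module
    rw [this, norm_smul]
    have h1 : ‖z - x‖ = ‖x - z‖ := norm_sub_rev z x
    rw [h1]
    have hu : |(1 - u)| ≤ 1 := by
      rw [abs_of_nonneg (by linarith [hu01.2] : (0:ℝ) ≤ 1 - u)]
      linarith [hu01.1]
    calc |(1 - u)| * ‖x - z‖ ≤ 1 * ‖x - z‖ :=
          mul_le_mul_of_nonneg_right hu (norm_nonneg _)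
      _ = ‖x - z‖ := one_mul _
  exact ⟨le_trans (Metric.infDist_le_dist_of_mem hpfr) hxp,
    le_trans (Metric.infDist_le_dist_of_mem hpfr) hzp⟩

lemma integral_le_of_lintegral_le {α : Type*} [MeasurableSpace α] {μ : Measure α} {f : α → ℝ}
    (hf : AEStronglyMeasurable f μ) (h0 : 0 ≤ᵐ[μ] f) {c : ℝ} (hc : 0 ≤ c)
    (h : ∫⁻ a, ENNReal.ofReal (f a) ∂μ ≤ ENNReal.ofReal c) : ∫ a, f a ∂μ ≤ c := by
  rw [MeasureTheory.integral_eq_lintegral_of_nonneg_ae h0 hf]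
  exact ENNReal.toReal_le_of_le_ofReal hc h

set_option maxHeartbeats 2000000 in
/-- bounds for `(-Δ)^{t/2}_x G(x,y)` for `x` outside `Ω`, both near
(`x ∈ B_R(0) \ Ω`) and far (`x ∉ B_R(0)`) from the domain, where
`R = 1/3 + (4/3)(diam Ω + dist(0,Ω))`. -/
theorem fracLap_green_outside_bound (N : ℕ) (hN : 2 ≤ N)
    (Ω : Set (E N)) (hΩopen : IsOpen Ω) (hΩbd : Bornology.IsBounded Ω)
    (φ : E N → ℝ) (hφ : ContDiff ℝ 2 φ)
    (hΩeq : Ω = {x | φ x < 0}) (hfr : frontier Ω = {x | φ x = 0})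
    (hφgrad : ∀ x ∈ frontier Ω, fderiv ℝ φ x ≠ 0)
    (s : ℝ) (hs : s ∈ Set.Ioo (0 : ℝ) 1)
    (G : E N → E N → ℝ) (hGmeas : Measurable (Function.uncurry G))
    (hGnonneg : ∀ x y, 0 ≤ G x y)
    (hGzero : ∀ x y : E N, x ∉ Ω ∨ y ∉ Ω → G x y = 0)
    (C₁ : ℝ) (hC₁ : 0 < C₁)
    (hGupper : ∀ x ∈ Ω, ∀ y ∈ Ω, x ≠ y →
      G x y ≤ C₁ * min (‖x - y‖ ^ (-((N : ℝ) - 2 * s)))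
        (min (dd Ω x ^ s * ‖x - y‖ ^ (-((N : ℝ) - s)))
             (dd Ω y ^ s * ‖x - y‖ ^ (-((N : ℝ) - s)))))
    (t : ℝ) (hst : s ≤ t) (ht : t < min 1 (2 * s)) :
    ∃ C > 0,
      (∀ y ∈ Ω, ∀ x ∈ Metric.ball (0 : E N)
          (1 / 3 + 4 / 3 * (Metric.diam Ω + Metric.infDist 0 Ω)) \ Ω,
        0 < dd Ω x →
        ∫ z in Ω, G z y * ‖x - z‖ ^ (-((N : ℝ) + t)) ≤
          C * ‖x - y‖ ^ (-((N : ℝ) - 2 * s)) * (‖x - y‖ ^ (-t) + dd Ω x ^ (-t))) ∧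
      (∀ y ∈ Ω, ∀ x : E N,
        x ∉ Metric.ball (0 : E N) (1 / 3 + 4 / 3 * (Metric.diam Ω + Metric.infDist 0 Ω)) →
        ∫ z in Ω, G z y * ‖x - z‖ ^ (-((N : ℝ) + t)) ≤ C * (1 + ‖x‖) ^ (-((N : ℝ) + t))) := by
  have hN0 : 0 < N := by omega
  have hs0 : 0 < s := hs.1
  have hs1 : s < 1 := hs.2
  have ht2s : t < 2 * s := lt_of_lt_of_le ht (min_le_right _ _)
  have ht0 : 0 < t := lt_of_lt_of_le hs0 hst
  have h2sN : 2 * s < N := by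
    have h2 : (2:ℝ) ≤ (N:ℝ) := by exact_mod_cast hN
    linarith
  obtain ⟨C₂, hC₂top, hC₂⟩ := riesz_bound hN0 hs0 h2sN
  obtain ⟨Cb, hCbtop, hCbball⟩ := lint_ball_rpow hN0 (a := 2 * s - (N:ℝ))
    (by linarith) (by linarith)
  set D := Metric.diam Ω + Metric.infDist 0 Ω with hD
  have hD0 : 0 ≤ D := add_nonneg Metric.diam_nonneg Metric.infDist_nonneg
  have hzD : ∀ z ∈ Ω, ‖z‖ ≤ D := by
    intro z hz
    have h1 := Metric.dist_le_infDist_add_diam (x := (0 : E N)) hΩbd hz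
    rw [dist_zero_left] at h1
    rw [hD]; linarith
  set Kr := C₁ * C₂.toReal with hKr
  set Kf := C₁ * (4:ℝ) ^ ((N:ℝ) + t) *
    (Cb.toReal * (D + 1) ^ ((N:ℝ) + (2 * s - (N:ℝ)))) with hKf
  have hKr0 : 0 ≤ Kr := mul_nonneg hC₁.le ENNReal.toReal_nonneg
  have hKf0 : 0 ≤ Kf := mul_nonneg (mul_nonneg hC₁.le (rpow_nonneg (by norm_num) _))
    (mul_nonneg ENNReal.toReal_nonneg (rpow_nonneg (by linarith) _))
  have hGym : ∀ y : E N, Measurable fun z : E N => G z y := fun y =>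
    hGmeas.comp (measurable_id.prodMk measurable_const)
  have hmru : Measurable fun u : ℝ => u ^ (-((N:ℝ) + t)) := by measurability
  refine ⟨Kr + Kf + 1, by linarith, ?_, ?_⟩
  · -- part (a)
    intro y hy x hx hδ
    obtain ⟨hxB, hxΩ⟩ := hx
    have hxy : x ≠ y := fun h => hxΩ (h ▸ hy)
    have hr : 0 < ‖x - y‖ := norm_sub_pos_iff.mpr hxy
    have hfmeas : Measurable fun z : E N => G z y * ‖x - z‖ ^ (-((N:ℝ) + t)) :=
      (hGym y).mul (hmru.comp (measurable_const.sub measurable_id).norm)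
    have hfpos : 0 ≤ᵐ[volume.restrict Ω]
        fun z => G z y * ‖x - z‖ ^ (-((N:ℝ) + t)) :=
      Filter.Eventually.of_forall fun z =>
        mul_nonneg (hGnonneg z y) (rpow_nonneg (norm_nonneg _) _)
    have hδ0 : 0 ≤ dd Ω x := Metric.infDist_nonneg
    have hRHS0 : 0 ≤ (Kr + Kf + 1) * ‖x - y‖ ^ (-((N:ℝ) - 2 * s)) *
        (‖x - y‖ ^ (-t) + dd Ω x ^ (-t)) := by
      apply mul_nonneg (mul_nonneg (by linarith) (rpow_nonneg (norm_nonneg _) _))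
      exact add_nonneg (rpow_nonneg (norm_nonneg _) _) (rpow_nonneg hδ0 _)
    apply integral_le_of_lintegral_le hfmeas.aestronglyMeasurable hfpos hRHS0
    -- pointwise bound
    have key : ∀ z ∈ Ω, z ≠ y → G z y * ‖x - z‖ ^ (-((N:ℝ) + t)) ≤
        (C₁ * dd Ω x ^ (-t)) * (‖z - y‖ ^ (s - (N:ℝ)) * ‖z - x‖ ^ (s - (N:ℝ))) := by
      intro z hz hzy
      obtain ⟨hxzd, hzzd⟩ := frontier_dist_bound Ω φ hφ.continuous hΩeq hfr hxΩ hz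
      have hxz0 : 0 < ‖x - z‖ := lt_of_lt_of_le hδ hxzd
      have h1 : G z y ≤ C₁ * (dd Ω z ^ s * ‖z - y‖ ^ (s - (N:ℝ))) := by
        have h2 := hGupper z hz y hy hzy
        have h3 : min (‖z - y‖ ^ (-((N:ℝ) - 2 * s)))
            (min (dd Ω z ^ s * ‖z - y‖ ^ (-((N:ℝ) - s)))
              (dd Ω y ^ s * ‖z - y‖ ^ (-((N:ℝ) - s)))) ≤
            dd Ω z ^ s * ‖z - y‖ ^ (-((N:ℝ) - s)) :=
          le_trans (min_le_right _ _) (min_le_left _ _)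
        have h4 := le_trans h2 (mul_le_mul_of_nonneg_left h3 hC₁.le)
        rwa [neg_sub] at h4
      have hdz : dd Ω z ≤ ‖x - z‖ := by
        unfold dd at *
        exact hzzd
      calc G z y * ‖x - z‖ ^ (-((N:ℝ) + t))
          ≤ (C₁ * (dd Ω z ^ s * ‖z - y‖ ^ (s - (N:ℝ)))) * ‖x - z‖ ^ (-((N:ℝ) + t)) :=
            mul_le_mul_of_nonneg_right h1 (rpow_nonneg (norm_nonneg _) _)
        _ ≤ (C₁ * (‖x - z‖ ^ s * ‖z - y‖ ^ (s - (N:ℝ)))) * ‖x - z‖ ^ (-((N:ℝ) + t)) := by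
            have h5 : dd Ω z ^ s ≤ ‖x - z‖ ^ s :=
              Real.rpow_le_rpow Metric.infDist_nonneg hdz hs0.le
            have h6 : (0:ℝ) ≤ ‖z - y‖ ^ (s - (N:ℝ)) := rpow_nonneg (norm_nonneg _) _
            have h7 : (0:ℝ) ≤ ‖x - z‖ ^ (-((N:ℝ) + t)) := rpow_nonneg (norm_nonneg _) _
            exact mul_le_mul_of_nonneg_right (mul_le_mul_of_nonneg_left
              (mul_le_mul_of_nonneg_right h5 h6) hC₁.le) h7
        _ = (C₁ * ‖z - y‖ ^ (s - (N:ℝ))) * ‖x - z‖ ^ (s + -((N:ℝ) + t)) := by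
            rw [Real.rpow_add hxz0]; ring
        _ = (C₁ * ‖z - y‖ ^ (s - (N:ℝ))) * (‖x - z‖ ^ (-t) * ‖x - z‖ ^ (s - (N:ℝ))) := by
            rw [← Real.rpow_add hxz0]
            congr 1
            congr 1
            ring
        _ ≤ (C₁ * ‖z - y‖ ^ (s - (N:ℝ))) * (dd Ω x ^ (-t) * ‖x - z‖ ^ (s - (N:ℝ))) := by
            have h8 : ‖x - z‖ ^ (-t) ≤ dd Ω x ^ (-t) :=
              rpow_le_rpow_of_nonpos hδ hxzd (by linarith)
            have h9 : (0:ℝ) ≤ ‖x - z‖ ^ (s - (N:ℝ)) := rpow_nonneg (norm_nonneg _) _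
            have h10 : (0:ℝ) ≤ C₁ * ‖z - y‖ ^ (s - (N:ℝ)) :=
              mul_nonneg hC₁.le (rpow_nonneg (norm_nonneg _) _)
            exact mul_le_mul_of_nonneg_left (mul_le_mul_of_nonneg_right h8 h9) h10
        _ = (C₁ * dd Ω x ^ (-t)) * (‖z - y‖ ^ (s - (N:ℝ)) * ‖z - x‖ ^ (s - (N:ℝ))) := by
            rw [norm_sub_rev x z]; ring
    have hc0 : 0 ≤ C₁ * dd Ω x ^ (-t) := mul_nonneg hC₁.le (rpow_nonneg hδ0 _)
    have hae : ∀ᵐ z ∂(volume.restrict Ω),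
        ENNReal.ofReal (G z y * ‖x - z‖ ^ (-((N:ℝ) + t))) ≤
        ENNReal.ofReal ((C₁ * dd Ω x ^ (-t)) *
          (‖z - y‖ ^ (s - (N:ℝ)) * ‖z - x‖ ^ (s - (N:ℝ)))) := by
      have h1 : ∀ᵐ (z : E N) ∂volume, z ≠ y := by
        rw [ae_iff]
        have h2 : {z : E N | ¬ z ≠ y} = {y} := by ext w; simp
        rw [h2]; exact vol_singleton hN0 y
      filter_upwards [ae_restrict_of_ae h1, ae_restrict_mem hΩopen.measurableSet]
        with z hzy hz
      exact ENNReal.ofReal_le_ofReal (key z hz hzy)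
    calc ∫⁻ z in Ω, ENNReal.ofReal (G z y * ‖x - z‖ ^ (-((N:ℝ) + t)))
        ≤ ∫⁻ z in Ω, ENNReal.ofReal ((C₁ * dd Ω x ^ (-t)) *
            (‖z - y‖ ^ (s - (N:ℝ)) * ‖z - x‖ ^ (s - (N:ℝ)))) := lintegral_mono_ae hae
      _ = ENNReal.ofReal (C₁ * dd Ω x ^ (-t)) *
            ∫⁻ z in Ω, ENNReal.ofReal (‖z - y‖ ^ (s - (N:ℝ)) * ‖z - x‖ ^ (s - (N:ℝ))) := by
          simp_rw [ENNReal.ofReal_mul hc0]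
          exact lintegral_const_mul' _ _ ENNReal.ofReal_ne_top
      _ ≤ ENNReal.ofReal (C₁ * dd Ω x ^ (-t)) *
            (C₂ * ENNReal.ofReal (‖x - y‖ ^ (2 * s - (N:ℝ)))) :=
          mul_le_mul_right (hC₂ Ω x y hxy) _
      _ ≤ ENNReal.ofReal ((Kr + Kf + 1) * ‖x - y‖ ^ (-((N:ℝ) - 2 * s)) *
            (‖x - y‖ ^ (-t) + dd Ω x ^ (-t))) := by
          rw [← ENNReal.ofReal_toReal hC₂top, ← ENNReal.ofReal_mul ENNReal.toReal_nonneg,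
            ← ENNReal.ofReal_mul hc0]
          apply ENNReal.ofReal_le_ofReal
          have hexp : -((N:ℝ) - 2 * s) = 2 * s - (N:ℝ) := by ring
          rw [hexp]
          have hw : (0:ℝ) ≤ ‖x - y‖ ^ (2 * s - (N:ℝ)) := rpow_nonneg (norm_nonneg _) _
          have hA : (0:ℝ) ≤ dd Ω x ^ (-t) := rpow_nonneg hδ0 _
          have hB : (0:ℝ) ≤ ‖x - y‖ ^ (-t) := rpow_nonneg (norm_nonneg _) _
          have hC₂' : (0:ℝ) ≤ C₂.toReal := ENNReal.toReal_nonneg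
          nlinarith [mul_nonneg (mul_nonneg hC₁.le hC₂') (mul_nonneg hw hB),
            mul_nonneg (mul_nonneg hKf0 hw) (add_nonneg hB hA),
            mul_nonneg hw (add_nonneg hB hA),
            mul_nonneg (mul_nonneg hKr0 hw) hB]
  · -- part (b)
    intro y hy x hxB
    have hxR : 1 / 3 + 4 / 3 * D ≤ ‖x‖ := by
      rw [Metric.mem_ball, dist_zero_right] at hxB
      push_neg at hxB
      exact hxB
    have hIx : (0:ℝ) < 1 + ‖x‖ := by positivity
    have hq : (0:ℝ) < (1 + ‖x‖) / 4 := by positivity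
    have hfar : ∀ z ∈ Ω, (1 + ‖x‖) / 4 ≤ ‖x - z‖ := by
      intro z hz
      have h1 : ‖z‖ ≤ D := hzD z hz
      have h2 : ‖x‖ - ‖z‖ ≤ ‖x - z‖ := norm_sub_norm_le x z
      linarith
    have hfmeas : Measurable fun z : E N => G z y * ‖x - z‖ ^ (-((N:ℝ) + t)) :=
      (hGym y).mul (hmru.comp (measurable_const.sub measurable_id).norm)
    have hfpos : 0 ≤ᵐ[volume.restrict Ω]
        fun z => G z y * ‖x - z‖ ^ (-((N:ℝ) + t)) :=
      Filter.Eventually.of_forall fun z =>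
        mul_nonneg (hGnonneg z y) (rpow_nonneg (norm_nonneg _) _)
    have hRHS0 : 0 ≤ (Kr + Kf + 1) * (1 + ‖x‖) ^ (-((N:ℝ) + t)) :=
      mul_nonneg (by linarith) (rpow_nonneg hIx.le _)
    apply integral_le_of_lintegral_le hfmeas.aestronglyMeasurable hfpos hRHS0
    set c := C₁ * ((1 + ‖x‖) / 4) ^ (-((N:ℝ) + t)) with hc
    have hc0 : 0 ≤ c := mul_nonneg hC₁.le (rpow_nonneg hq.le _)
    have key : ∀ z ∈ Ω, z ≠ y → G z y * ‖x - z‖ ^ (-((N:ℝ) + t)) ≤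
        c * ‖z - y‖ ^ (2 * s - (N:ℝ)) := by
      intro z hz hzy
      have h1 : G z y ≤ C₁ * ‖z - y‖ ^ (2 * s - (N:ℝ)) := by
        have h2 := hGupper z hz y hy hzy
        have h3 := le_trans h2 (mul_le_mul_of_nonneg_left (min_le_left _ _) hC₁.le)
        have hexp : -((N:ℝ) - 2 * s) = 2 * s - (N:ℝ) := by ring
        rwa [hexp] at h3
      have h4 : ‖x - z‖ ^ (-((N:ℝ) + t)) ≤ ((1 + ‖x‖) / 4) ^ (-((N:ℝ) + t)) :=
        rpow_le_rpow_of_nonpos hq (hfar z hz)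
          (by have : (0:ℝ) ≤ N := Nat.cast_nonneg N; linarith)
      calc G z y * ‖x - z‖ ^ (-((N:ℝ) + t))
          ≤ (C₁ * ‖z - y‖ ^ (2 * s - (N:ℝ))) * ((1 + ‖x‖) / 4) ^ (-((N:ℝ) + t)) :=
            mul_le_mul h1 h4 (rpow_nonneg (norm_nonneg _) _)
              (mul_nonneg hC₁.le (rpow_nonneg (norm_nonneg _) _))
        _ = c * ‖z - y‖ ^ (2 * s - (N:ℝ)) := by rw [hc]; ring
    have hae : ∀ᵐ z ∂(volume.restrict Ω),
        ENNReal.ofReal (G z y * ‖x - z‖ ^ (-((N:ℝ) + t))) ≤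
        ENNReal.ofReal (c * ‖z - y‖ ^ (2 * s - (N:ℝ))) := by
      have h1 : ∀ᵐ (z : E N) ∂volume, z ≠ y := by
        rw [ae_iff]
        have h2 : {z : E N | ¬ z ≠ y} = {y} := by ext w; simp
        rw [h2]; exact vol_singleton hN0 y
      filter_upwards [ae_restrict_of_ae h1, ae_restrict_mem hΩopen.measurableSet]
        with z hzy hz
      exact ENNReal.ofReal_le_ofReal (key z hz hzy)
    have hΩball : Ω ⊆ Metric.ball y (D + 1) := by
      intro z hz
      rw [Metric.mem_ball]
      have h1 : dist z y ≤ Metric.diam Ω := Metric.dist_le_diam_of_mem hΩbd hz hy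
      have h2 : Metric.diam Ω ≤ D := by rw [hD]; linarith [Metric.infDist_nonneg (x := (0:E N)) (s := Ω)]
      linarith
    calc ∫⁻ z in Ω, ENNReal.ofReal (G z y * ‖x - z‖ ^ (-((N:ℝ) + t)))
        ≤ ∫⁻ z in Ω, ENNReal.ofReal (c * ‖z - y‖ ^ (2 * s - (N:ℝ))) := lintegral_mono_ae hae
      _ = ENNReal.ofReal c * ∫⁻ z in Ω, ENNReal.ofReal (‖z - y‖ ^ (2 * s - (N:ℝ))) := by
          simp_rw [ENNReal.ofReal_mul hc0]
          exact lintegral_const_mul' _ _ ENNReal.ofReal_ne_top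
      _ ≤ ENNReal.ofReal c *
            ∫⁻ z in Metric.ball y (D + 1), ENNReal.ofReal (‖z - y‖ ^ (2 * s - (N:ℝ))) :=
          mul_le_mul_right (lintegral_mono_set hΩball) _
      _ ≤ ENNReal.ofReal c * (Cb * ENNReal.ofReal ((D + 1) ^ ((N:ℝ) + (2 * s - (N:ℝ))))) :=
          mul_le_mul_right (hCbball y (D + 1) (by linarith)) _
      _ ≤ ENNReal.ofReal ((Kr + Kf + 1) * (1 + ‖x‖) ^ (-((N:ℝ) + t))) := by
          rw [← ENNReal.ofReal_toReal hCbtop, ← ENNReal.ofReal_mul ENNReal.toReal_nonneg,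
            ← ENNReal.ofReal_mul hc0]
          apply ENNReal.ofReal_le_ofReal
          have hid : ((1 + ‖x‖) / 4) ^ (-((N:ℝ) + t)) =
              (1 + ‖x‖) ^ (-((N:ℝ) + t)) * (4:ℝ) ^ ((N:ℝ) + t) := by
            rw [div_rpow_eq hIx.le (by norm_num : (0:ℝ) < 4), neg_neg]
          rw [hc, hid]
          have h1 : (0:ℝ) ≤ (1 + ‖x‖) ^ (-((N:ℝ) + t)) := rpow_nonneg hIx.le _
          have h2 : (0:ℝ) ≤ Cb.toReal * (D + 1) ^ ((N:ℝ) + (2 * s - (N:ℝ))) :=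
            mul_nonneg ENNReal.toReal_nonneg (rpow_nonneg (by linarith) _)
          have h3 : (0:ℝ) ≤ (4:ℝ) ^ ((N:ℝ) + t) := rpow_nonneg (by norm_num) _
          nlinarith [mul_nonneg h1 (mul_nonneg (mul_nonneg hC₁.le h3) h2),
            mul_nonneg hKr0 h1, mul_nonneg hKf0 h1]

end
end
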